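/- Let λ*_α denote the minimizer of λ ↦ E[((R-λ)_+)² + exp(2α)·((R-λ)_-)²] for a bounded random variable R with nondegenerate distribution. Then λ*_α is nonincreasing in α, and λ*_0 = E[R]. -/

import Mathlib

/-!
For `k ≥ 1` the loss `L_k(l) = E[(R - l)₊² + k (R - l)₋²]` is `1`-strongly convex in `l`,
so a minimiser `a` satisfies `L_k(a) + (b - a)²/2 ≤ L_k(b)` for every `b`. If `k ≤ k'` had
minimisers `a < b`, adding the two such inequalities would give
`(b - a)² ≤ (k' - k) (E[(R - a)₋²] - E[(R - b)₋²]) ≤ 0`. For `k = 1` the loss is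
`E[(R - l)²] = Var R + (E R - l)²`, minimised exactly at the mean.
-/

open MeasureTheory

def asymSq (k u : ℝ) : ℝ := max u 0 ^ 2 + k * min u 0 ^ 2

lemma max_sq_add_min_sq (u : ℝ) : max u 0 ^ 2 + min u 0 ^ 2 = u ^ 2 := by
  rcases le_total u 0 with h | h
  · simp [max_eq_right h, min_eq_left h]
  · simp [max_eq_left h, min_eq_right h]

lemma asymSq_one (u : ℝ) : asymSq 1 u = u ^ 2 := by
  rw [asymSq, one_mul, max_sq_add_min_sq]

lemma antitone_min_zero_sq : Antitone fun u : ℝ => min u 0 ^ 2 := by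
  intro u v huv
  show min v 0 ^ 2 ≤ min u 0 ^ 2
  have huv' := min_le_min_right 0 huv
  have hv : min v 0 ≤ 0 := min_le_right _ _
  nlinarith

lemma asymSq_midpoint_add_le {k : ℝ} (hk : 1 ≤ k) (u v : ℝ) :
    asymSq k ((u + v) / 2) + (u - v) ^ 2 / 4 ≤ (asymSq k u + asymSq k v) / 2 := by
  -- `asymSq k u = u² + (k - 1) (u)₋²`, and `u ↦ (u)₋²` is convex
  have hconv : 2 * min ((u + v) / 2) 0 ^ 2 ≤ min u 0 ^ 2 + min v 0 ^ 2 := by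
    have hu : min u 0 ≤ 0 := min_le_right _ _
    have hv : min v 0 ≤ 0 := min_le_right _ _
    have hw : (min u 0 + min v 0) / 2 ≤ min ((u + v) / 2) 0 :=
      le_min (by linarith [min_le_left u 0, min_le_left v 0]) (by linarith)
    have hw0 : min ((u + v) / 2) 0 ≤ 0 := min_le_right _ _
    nlinarith [sq_nonneg (min u 0 - min v 0)]
  have hu := max_sq_add_min_sq u
  have hv := max_sq_add_min_sq v
  have hw := max_sq_add_min_sq ((u + v) / 2)
  unfold asymSq
  nlinarith [mul_le_mul_of_nonneg_left hconv (sub_nonneg.2 hk)]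

section AsymLoss

variable {Ω : Type*} [MeasurableSpace Ω] {μ : Measure Ω} {R : Ω → ℝ}

noncomputable def asymLoss (μ : Measure Ω) (R : Ω → ℝ) (k l : ℝ) : ℝ :=
  ∫ ω, asymSq k (R ω - l) ∂μ

variable [IsProbabilityMeasure μ]

lemma integrable_min_sub_sq (hR : MemLp R 2 μ) (l : ℝ) :
    Integrable (fun ω => min (R ω - l) 0 ^ 2) μ := by
  refine MemLp.integrable_sq <| (hR.sub (memLp_const l)).of_le ?_ ?_
  · exact (continuous_id.min continuous_const).comp_aestronglyMeasurable
      (hR.sub (memLp_const l)).aestronglyMeasurable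
  · refine Filter.Eventually.of_forall fun ω => ?_
    rcases le_total (R ω - l) 0 with h | h <;> simp [h]

lemma integrable_asymSq (hR : MemLp R 2 μ) (k l : ℝ) :
    Integrable (fun ω => asymSq k (R ω - l)) μ := by
  have hsplit : ∀ u, asymSq k u = u ^ 2 + (k - 1) * min u 0 ^ 2 := fun u => by
    rw [asymSq, ← max_sq_add_min_sq u]; ring
  simp only [hsplit]
  exact (hR.sub (memLp_const l)).integrable_sq.add ((integrable_min_sub_sq hR l).const_mul _)


lemma asymLoss_midpoint_add_le (hR : MemLp R 2 μ) {k : ℝ} (hk : 1 ≤ k) (a b : ℝ) :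
    asymLoss μ R k ((a + b) / 2) + (b - a) ^ 2 / 4 ≤
      (asymLoss μ R k a + asymLoss μ R k b) / 2 := by
  have hpt : ∀ ω, asymSq k (R ω - (a + b) / 2) + (b - a) ^ 2 / 4 ≤
      (asymSq k (R ω - a) + asymSq k (R ω - b)) / 2 := fun ω => by
    have h := asymSq_midpoint_add_le hk (R ω - a) (R ω - b)
    rwa [show ((R ω - a) + (R ω - b)) / 2 = R ω - (a + b) / 2 by ring,
      show (R ω - a - (R ω - b)) ^ 2 = (b - a) ^ 2 by ring] at h
  calc asymLoss μ R k ((a + b) / 2) + (b - a) ^ 2 / 4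
      = ∫ ω, (asymSq k (R ω - (a + b) / 2) + (b - a) ^ 2 / 4) ∂μ := by
        rw [integral_add (integrable_asymSq hR k _) (integrable_const _), integral_const,
          probReal_univ, one_smul, asymLoss]
    _ ≤ ∫ ω, (asymSq k (R ω - a) + asymSq k (R ω - b)) / 2 ∂μ :=
        integral_mono ((integrable_asymSq hR k _).add (integrable_const _))
          (((integrable_asymSq hR k a).add (integrable_asymSq hR k b)).div_const 2) hpt
    _ = (asymLoss μ R k a + asymLoss μ R k b) / 2 := by
        rw [integral_div, integral_add (integrable_asymSq hR k a) (integrable_asymSq hR k b),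
          asymLoss, asymLoss]

lemma asymLoss_add_sq_le_of_isMin (hR : MemLp R 2 μ) {k a : ℝ} (hk : 1 ≤ k)
    (ha : ∀ l, asymLoss μ R k a ≤ asymLoss μ R k l) (b : ℝ) :
    asymLoss μ R k a + (b - a) ^ 2 / 2 ≤ asymLoss μ R k b := by
  have hmid := asymLoss_midpoint_add_le hR hk a b
  have hmin := ha ((a + b) / 2)
  linarith

lemma asymLoss_add_left (hR : MemLp R 2 μ) (k c l : ℝ) :
    asymLoss μ R (k + c) l = asymLoss μ R k l + c * ∫ ω, min (R ω - l) 0 ^ 2 ∂μ := by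
  rw [asymLoss, asymLoss, ← integral_const_mul,
    ← integral_add (integrable_asymSq hR k l) ((integrable_min_sub_sq hR l).const_mul c)]
  congr 1 with ω
  rw [asymSq, asymSq]
  ring

lemma isMin_asymLoss_antitone (hR : MemLp R 2 μ) {k k' a b : ℝ} (hk : 1 ≤ k) (hkk' : k ≤ k')
    (ha : ∀ l, asymLoss μ R k a ≤ asymLoss μ R k l)
    (hb : ∀ l, asymLoss μ R k' b ≤ asymLoss μ R k' l) : b ≤ a := by
  by_contra! hab
  have hleft := asymLoss_add_sq_le_of_isMin hR hk ha b
  have hright := asymLoss_add_sq_le_of_isMin hR (hk.trans hkk') hb a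
  -- raising `k` penalises `(R - l)₋²` more, and that penalty grows with `l`
  have hpen : ∫ ω, min (R ω - a) 0 ^ 2 ∂μ ≤ ∫ ω, min (R ω - b) 0 ^ 2 ∂μ :=
    integral_mono (integrable_min_sub_sq hR a) (integrable_min_sub_sq hR b)
      fun ω => antitone_min_zero_sq (by linarith)
  rw [show k' = k + (k' - k) by ring, asymLoss_add_left hR, asymLoss_add_left hR] at hright
  nlinarith [mul_le_mul_of_nonneg_left hpen (sub_nonneg.2 hkk')]

lemma asymLoss_one_eq (hR : MemLp R 2 μ) (l : ℝ) :
    asymLoss μ R 1 l = asymLoss μ R 1 (∫ ω, R ω ∂μ) + (∫ ω, R ω ∂μ - l) ^ 2 := by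
  set m := ∫ ω, R ω ∂μ
  have hRint : Integrable R μ := hR.integrable one_le_two
  have hpt : ∀ ω, asymSq 1 (R ω - l) =
      asymSq 1 (R ω - m) + (2 * (m - l) * R ω + (l ^ 2 - m ^ 2)) := fun ω => by
    rw [asymSq_one, asymSq_one]; ring
  have hlin : Integrable (fun ω => 2 * (m - l) * R ω + (l ^ 2 - m ^ 2)) μ :=
    (hRint.const_mul _).add (integrable_const _)
  rw [asymLoss, asymLoss, integral_congr_ae (ae_of_all _ hpt),
    integral_add (integrable_asymSq hR 1 _) hlin,
    integral_add (hRint.const_mul _) (integrable_const _), integral_const_mul, integral_const,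
    probReal_univ, one_smul]
  ring

lemma eq_integral_of_isMin_asymLoss_one (hR : MemLp R 2 μ) {a : ℝ}
    (ha : ∀ l, asymLoss μ R 1 a ≤ asymLoss μ R 1 l) : a = ∫ ω, R ω ∂μ := by
  have h := ha (∫ ω, R ω ∂μ)
  rw [asymLoss_one_eq hR a] at h
  have hsq : (∫ ω, R ω ∂μ - a) ^ 2 = 0 := le_antisymm (by linarith) (sq_nonneg _)
  linarith [pow_eq_zero_iff two_ne_zero |>.1 hsq]

end AsymLoss

theorem stmt9_general {Ω : Type*} [MeasurableSpace Ω] (μ : Measure Ω)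
    [IsProbabilityMeasure μ] (R : Ω → ℝ) (hR : Measurable R)
    (M : ℝ) (hbdd : ∀ ω, |R ω| ≤ M)
    (lamStar : ℝ → ℝ)
    (hmin : ∀ α ∈ Set.Ici (0 : ℝ), ∀ l : ℝ,
      (∫ ω, ((max (R ω - lamStar α) 0) ^ 2 +
        Real.exp (2 * α) * (min (R ω - lamStar α) 0) ^ 2) ∂μ) ≤
      ∫ ω, ((max (R ω - l) 0) ^ 2 +
        Real.exp (2 * α) * (min (R ω - l) 0) ^ 2) ∂μ) :
    AntitoneOn lamStar (Set.Ici 0) ∧ lamStar 0 = ∫ ω, R ω ∂μ := by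
  have hR2 : MemLp R 2 μ := MemLp.of_bound hR.aestronglyMeasurable M (ae_of_all _ hbdd)
  have hmin' : ∀ α : ℝ, 0 ≤ α → ∀ l,
      asymLoss μ R (Real.exp (2 * α)) (lamStar α) ≤ asymLoss μ R (Real.exp (2 * α)) l :=
    hmin
  refine ⟨fun α hα β hβ hαβ => ?_, ?_⟩
  · exact isMin_asymLoss_antitone hR2 (Real.one_le_exp (by simpa using hα))
      (Real.exp_le_exp.2 (by linarith)) (hmin' α hα) (hmin' β hβ)
  · have h0 := hmin' 0 le_rfl
    rw [mul_zero, Real.exp_zero] at h0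
    exact eq_integral_of_isMin_asymLoss_one hR2 h0

/-- The minimizer `λ*_α` of the asymmetric squared loss is nonincreasing in
`α`, and at `α = 0` it equals the mean `E[R]`. -/
theorem stmt9 {Ω : Type*} [MeasurableSpace Ω] (μ : Measure Ω)
    [IsProbabilityMeasure μ] (R : Ω → ℝ) (hR : Measurable R)
    (M : ℝ) (hbdd : ∀ ω, |R ω| ≤ M)
    (hnd : ¬ ∀ᵐ ω ∂μ, R ω = ∫ x, R x ∂μ)
    (lamStar : ℝ → ℝ)
    (hmin : ∀ α ∈ Set.Ici (0 : ℝ), ∀ l : ℝ,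
      (∫ ω, ((max (R ω - lamStar α) 0) ^ 2 +
        Real.exp (2 * α) * (min (R ω - lamStar α) 0) ^ 2) ∂μ) ≤
      ∫ ω, ((max (R ω - l) 0) ^ 2 +
        Real.exp (2 * α) * (min (R ω - l) 0) ^ 2) ∂μ) :
    AntitoneOn lamStar (Set.Ici 0) ∧ lamStar 0 = ∫ ω, R ω ∂μ :=
  stmt9_general μ R hR M hbdd lamStar hmin
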